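/- Let U ⊆ ℝ^d be open, let ρ : U → ℝ be three times continuously differentiable with ρ(x) > 0 for all x ∈ U, and let k : (0, ∞) → ℝ be twice continuously differentiable. Define the Korteweg stress tensor 𝕂(x) = ( div(ρ k(ρ) ∇ρ)(x) − (1/2)(ρ(x) k'(ρ(x)) + k(ρ(x))) |∇ρ(x)|² ) 𝕀 − k(ρ(x)) ∇ρ(x) ⊗ ∇ρ(x), where 𝕀 is the d×d identity matrix. Then for every x ∈ U and every j ∈ {1, …, d}: ρ(x) ∂_j( div(k(ρ)∇ρ) − (1/2) k'(ρ)|∇ρ|² )(x) = Σ_{i=1}^d ∂_i 𝕂_{ij}(x); that is, ρ ∇( div(k(ρ)∇ρ) − (1/2) k'(ρ)|∇ρ|² ) = div 𝕂. -/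

import Mathlib

open Set Filter Topology

noncomputable def pder (d : ℕ) (i : Fin d) (f : EuclideanSpace ℝ (Fin d) → ℝ)
    (x : EuclideanSpace ℝ (Fin d)) : ℝ :=
  fderiv ℝ f x (EuclideanSpace.single i 1)

/-- The Korteweg stress tensor
`𝕂 = (div(ρ k(ρ) ∇ρ) − (1/2)(ρ k'(ρ) + k(ρ))|∇ρ|²) 𝕀 − k(ρ) ∇ρ ⊗ ∇ρ`,
written componentwise. -/
noncomputable def kortewegTensor (d : ℕ) (k : ℝ → ℝ) (ρ : EuclideanSpace ℝ (Fin d) → ℝ)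
    (i j : Fin d) (x : EuclideanSpace ℝ (Fin d)) : ℝ :=
  ((∑ l, pder d l (fun y => ρ y * k (ρ y) * pder d l ρ y) x)
      - (1 / 2) * (ρ x * deriv k (ρ x) + k (ρ x)) * ∑ l, (pder d l ρ x) ^ 2)
    * (if i = j then 1 else 0)
  - k (ρ x) * pder d i ρ x * pder d j ρ x

variable {d : ℕ} {i j : Fin d} {f g : EuclideanSpace ℝ (Fin d) → ℝ}
  {x : EuclideanSpace ℝ (Fin d)}

lemma pder_congr (h : f =ᶠ[𝓝 x] g) : pder d i f x = pder d i g x := by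
  unfold pder; rw [Filter.EventuallyEq.fderiv_eq h]

lemma pder_add (hf : DifferentiableAt ℝ f x) (hg : DifferentiableAt ℝ g x) :
    pder d i (fun y => f y + g y) x = pder d i f x + pder d i g x := by
  unfold pder; rw [fderiv_fun_add hf hg]; simp

lemma pder_sub (hf : DifferentiableAt ℝ f x) (hg : DifferentiableAt ℝ g x) :
    pder d i (fun y => f y - g y) x = pder d i f x - pder d i g x := by
  unfold pder; rw [fderiv_fun_sub hf hg]; simp

lemma pder_mul (hf : DifferentiableAt ℝ f x) (hg : DifferentiableAt ℝ g x) :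
    pder d i (fun y => f y * g y) x = pder d i f x * g x + f x * pder d i g x := by
  unfold pder; rw [fderiv_fun_mul hf hg]; simp; ring

lemma pder_const_mul (c : ℝ) (hf : DifferentiableAt ℝ f x) :
    pder d i (fun y => c * f y) x = c * pder d i f x := by
  unfold pder; rw [fderiv_const_mul hf]; simp

lemma pder_mul_const (c : ℝ) (hf : DifferentiableAt ℝ f x) :
    pder d i (fun y => f y * c) x = pder d i f x * c := by
  unfold pder; rw [fderiv_mul_const hf]; simp [mul_comm]

lemma pder_sum {ι : Type*} (s : Finset ι) (F : ι → EuclideanSpace ℝ (Fin d) → ℝ)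
    (hf : ∀ l ∈ s, DifferentiableAt ℝ (F l) x) :
    pder d i (fun y => ∑ l ∈ s, F l y) x = ∑ l ∈ s, pder d i (F l) x := by
  unfold pder; rw [fderiv_fun_sum hf]; simp

lemma pder_comp {k : ℝ → ℝ} (hk : DifferentiableAt ℝ k (f x)) (hf : DifferentiableAt ℝ f x) :
    pder d i (fun y => k (f y)) x = deriv k (f x) * pder d i f x := by
  unfold pder
  have : (fun y => k (f y)) = k ∘ f := rfl
  rw [this, (hk.hasDerivAt.comp_hasFDerivAt x hf.hasFDerivAt).fderiv]
  simp [mul_comm]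

lemma contDiffAt_pder {n m : WithTop ℕ∞} (hf : ContDiffAt ℝ m f x) (h : n + 1 ≤ m) :
    ContDiffAt ℝ n (fun y => pder d i f y) x :=
  (hf.fderiv_right h).clm_apply contDiffAt_const

lemma differentiableAt_pder (hf : ContDiffAt ℝ 2 f x) :
    DifferentiableAt ℝ (fun y => pder d i f y) x :=
  (contDiffAt_pder (n := 1) hf (by norm_num)).differentiableAt one_ne_zero

lemma pder_comm (hf : ContDiffAt ℝ 2 f x) (i l : Fin d) :
    pder d i (fun y => pder d l f y) x = pder d l (fun y => pder d i f y) x := by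
  have hd : DifferentiableAt ℝ (fderiv ℝ f) x :=
    (hf.fderiv_right (m := 1) (by norm_num)).differentiableAt one_ne_zero
  have hsymm := hf.isSymmSndFDerivAt (by simp [minSmoothness_of_isRCLikeNormedField])
  have key : ∀ v w : EuclideanSpace ℝ (Fin d),
      fderiv ℝ (fun y => fderiv ℝ f y w) x v = fderiv ℝ (fderiv ℝ f) x v w := by
    intro v w
    rw [fderiv_clm_apply hd (differentiableAt_const w)]
    simp
  unfold pder
  rw [key, key, hsymm]

/-- For `ρ` a positive `C³` function on an open set `U ⊆ ℝ^d` and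
`k` a `C²` function on `(0, ∞)`, the capillarity term is in divergence form:
`ρ ∇( div(k(ρ)∇ρ) − (1/2) k'(ρ)|∇ρ|² ) = div 𝕂` on `U`, where `div 𝕂` is the
row-wise divergence `(div 𝕂)_j = ∑ᵢ ∂ᵢ 𝕂ᵢⱼ`. -/
theorem stmt10 (d : ℕ) (U : Set (EuclideanSpace ℝ (Fin d))) (hU : IsOpen U)
    (ρ : EuclideanSpace ℝ (Fin d) → ℝ) (hρ : ContDiffOn ℝ 3 ρ U)
    (hρ_pos : ∀ x ∈ U, 0 < ρ x)
    (k : ℝ → ℝ) (hk : ContDiffOn ℝ 2 k (Ioi 0)) :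
    ∀ x ∈ U, ∀ j : Fin d,
      ρ x * pder d j
          (fun y => (∑ i, pder d i (fun z => k (ρ z) * pder d i ρ z) y)
            - (1 / 2) * deriv k (ρ y) * ∑ i, (pder d i ρ y) ^ 2) x =
        ∑ i, pder d i (fun y => kortewegTensor d k ρ i j y) x := by
  intro x hx j
  have hUx : U ∈ 𝓝 x := hU.mem_nhds hx
  have hρAt : ∀ y ∈ U, ContDiffAt ℝ 3 ρ y := fun y hy => hρ.contDiffAt (hU.mem_nhds hy)
  have hρ2 : ∀ y ∈ U, ContDiffAt ℝ 2 ρ y := fun y hy => (hρAt y hy).of_le (by norm_num)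
  have hρd : ∀ y ∈ U, DifferentiableAt ℝ ρ y := fun y hy =>
    (hρ2 y hy).differentiableAt (by norm_num)
  have hkAt : ∀ y ∈ U, ContDiffAt ℝ 2 k (ρ y) := fun y hy =>
    hk.contDiffAt (isOpen_Ioi.mem_nhds (hρ_pos y hy))
  have hkρ : ∀ y ∈ U, ContDiffAt ℝ 2 (fun z => k (ρ z)) y := fun y hy =>
    (hkAt y hy).comp y (hρ2 y hy)
  have hkρd : ∀ y ∈ U, DifferentiableAt ℝ (fun z => k (ρ z)) y := fun y hy =>
    (hkρ y hy).differentiableAt (by norm_num)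
  have hP : ∀ y ∈ U, ∀ l : Fin d, ContDiffAt ℝ 2 (fun z => pder d l ρ z) y := fun y hy l =>
    contDiffAt_pder (hρAt y hy) (by norm_num)
  have hPd : ∀ y ∈ U, ∀ l : Fin d, DifferentiableAt ℝ (fun z => pder d l ρ z) y := fun y hy l =>
    (hP y hy l).differentiableAt (by norm_num)
  have hkP : ∀ y ∈ U, ∀ l : Fin d, ContDiffAt ℝ 2 (fun z => k (ρ z) * pder d l ρ z) y :=
    fun y hy l => (hkρ y hy).mul (hP y hy l)
  have hρkP : ∀ y ∈ U, ∀ l : Fin d,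
      ContDiffAt ℝ 2 (fun z => ρ z * (k (ρ z) * pder d l ρ z)) y :=
    fun y hy l => (hρ2 y hy).mul (hkP y hy l)
  have hFd : DifferentiableAt ℝ (fun y => ∑ i, pder d i (fun z => k (ρ z) * pder d i ρ z) y) x :=
    DifferentiableAt.fun_sum (fun l _ => differentiableAt_pder (hkP x hx l))
  have hGd : DifferentiableAt ℝ (fun y => ∑ i, (pder d i ρ y) ^ 2) x :=
    DifferentiableAt.fun_sum (fun l _ => (hPd x hx l).pow 2)
  have hHd : DifferentiableAt ℝ (fun y => deriv k (ρ y)) x := by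
    have h1 : ContDiffAt ℝ 1 (fun t => fderiv ℝ k t 1) (ρ x) :=
      ((hkAt x hx).fderiv_right (by norm_num)).clm_apply contDiffAt_const
    have h2 : (fun y => deriv k (ρ y)) = (fun y => fderiv ℝ k (ρ y) 1) := by
      funext y; rw [fderiv_apply_one_eq_deriv]
    rw [h2]
    exact (h1.differentiableAt one_ne_zero).comp x (hρd x hx)
  have hHGd : DifferentiableAt ℝ
      (fun y => deriv k (ρ y) * ∑ i, (pder d i ρ y) ^ 2) x := hHd.mul hGd
  have hS1d : DifferentiableAt ℝ
      (fun y => ∑ l, pder d l (fun z => ρ z * (k (ρ z) * pder d l ρ z)) y) x :=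
    DifferentiableAt.fun_sum (fun l _ => differentiableAt_pder (hρkP x hx l))
  have hkd : DifferentiableAt ℝ k (ρ x) := (hkAt x hx).differentiableAt (by norm_num)
  have hTd : ∀ i : Fin d, DifferentiableAt ℝ
      (fun y => k (ρ y) * (pder d i ρ y * pder d j ρ y)) x :=
    fun i => (hkρd x hx).mul ((hPd x hx i).mul (hPd x hx j))
  have hSd : DifferentiableAt ℝ (fun y =>
      (∑ l, pder d l (fun z => ρ z * (k (ρ z) * pder d l ρ z)) y)
        - 1 / 2 * ((ρ y * deriv k (ρ y) + k (ρ y)) * ∑ l, (pder d l ρ y) ^ 2)) x :=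
    hS1d.sub (((((hρd x hx).mul hHd).add (hkρd x hx)).mul hGd).const_mul _)
  have htensor : ∀ i : Fin d,
      pder d i (fun y =>
        ((∑ l, pder d l (fun z => ρ z * (k (ρ z) * pder d l ρ z)) y)
            - 1 / 2 * ((ρ y * deriv k (ρ y) + k (ρ y)) * ∑ l, (pder d l ρ y) ^ 2))
          * (if i = j then 1 else 0)
        - k (ρ y) * (pder d i ρ y * pder d j ρ y)) x
      = (pder d i (fun y =>
            (∑ l, pder d l (fun z => ρ z * (k (ρ z) * pder d l ρ z)) y)
              - 1 / 2 * ((ρ y * deriv k (ρ y) + k (ρ y)) * ∑ l, (pder d l ρ y) ^ 2)) x)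
          * (if i = j then 1 else 0)
        - pder d i (fun y => k (ρ y) * (pder d i ρ y * pder d j ρ y)) x := fun i => by
    rw [pder_sub (hSd.mul_const _) (hTd i), pder_mul_const _ hSd]
  simp only [kortewegTensor, mul_assoc]
  conv_rhs => arg 2; ext i; rw [htensor i]
  rw [Finset.sum_sub_distrib]
  simp only [mul_ite, mul_one, mul_zero, Finset.sum_ite_eq', Finset.mem_univ, if_true]
  -- expand the left-hand side
  rw [pder_sub hFd (hHGd.const_mul _), pder_const_mul _ hHGd]
  -- expand `pder_j` of the diagonal part
  have hmixd : DifferentiableAt ℝ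
      (fun y => (ρ y * deriv k (ρ y) + k (ρ y)) * ∑ l : Fin d, (pder d l ρ y) ^ 2) x :=
    (((hρd x hx).mul hHd).add (hkρd x hx)).mul hGd
  rw [pder_sub hS1d (hmixd.const_mul _), pder_const_mul _ hmixd]
  have hcongr : pder d j (fun y => ∑ l, pder d l (fun z => ρ z * (k (ρ z) * pder d l ρ z)) y) x
      = pder d j (fun y => ρ y * ∑ i, pder d i (fun z => k (ρ z) * pder d i ρ z) y
          + k (ρ y) * ∑ i, (pder d i ρ y) ^ 2) x := by
    apply pder_congr
    filter_upwards [hUx] with y hy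
    rw [Finset.sum_congr rfl fun l (_ : l ∈ Finset.univ) =>
      pder_mul (hρd y hy) ((hkP y hy l).differentiableAt (by norm_num))]
    rw [Finset.sum_add_distrib, ← Finset.mul_sum]
    have h2 : ∑ l, pder d l ρ y * (k (ρ y) * pder d l ρ y)
        = k (ρ y) * ∑ l, (pder d l ρ y) ^ 2 := by
      rw [Finset.mul_sum]; exact Finset.sum_congr rfl fun l _ => by ring
    rw [h2]; ring
  rw [hcongr, pder_add ((hρd x hx).fun_mul hFd) ((hkρd x hx).fun_mul hGd),
    pder_mul (hρd x hx) hFd, pder_mul (hkρd x hx) hGd, pder_comp hkd (hρd x hx)]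
  have e1 : (fun y => (ρ y * deriv k (ρ y) + k (ρ y)) * ∑ l : Fin d, (pder d l ρ y) ^ 2)
      = fun y => ρ y * (deriv k (ρ y) * ∑ i : Fin d, (pder d i ρ y) ^ 2)
          + k (ρ y) * ∑ i : Fin d, (pder d i ρ y) ^ 2 := funext fun y => by ring
  rw [e1, pder_add ((hρd x hx).fun_mul hHGd) ((hkρd x hx).fun_mul hGd),
    pder_mul (hρd x hx) hHGd, pder_mul (hkρd x hx) hGd, pder_comp hkd (hρd x hx)]
  -- the off-diagonal part
  have hC : ∀ i : Fin d, pder d i (fun y => k (ρ y) * (pder d i ρ y * pder d j ρ y)) x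
      = pder d i (fun z => k (ρ z) * pder d i ρ z) x * pder d j ρ x
        + k (ρ x) * pder d i ρ x * pder d j (fun y => pder d i ρ y) x := by
    intro i
    have e2 : (fun y => k (ρ y) * (pder d i ρ y * pder d j ρ y))
        = fun y => (k (ρ y) * pder d i ρ y) * pder d j ρ y := funext fun y => by ring
    rw [e2, pder_mul ((hkρd x hx).fun_mul (hPd x hx i)) (hPd x hx j),
        pder_comm (hρ2 x hx) i j]
  have hCsum : ∑ i : Fin d, pder d i (fun y => k (ρ y) * (pder d i ρ y * pder d j ρ y)) x
      = (∑ i : Fin d, pder d i (fun z => k (ρ z) * pder d i ρ z) x) * pder d j ρ x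
        + 1 / 2 * (k (ρ x) * pder d j (fun y => ∑ i : Fin d, (pder d i ρ y) ^ 2) x) := by
    rw [Finset.sum_congr rfl fun i (_ : i ∈ Finset.univ) => hC i, Finset.sum_add_distrib,
      ← Finset.sum_mul]
    congr 1
    have hG' : pder d j (fun y => ∑ i : Fin d, (pder d i ρ y) ^ 2) x
        = ∑ i : Fin d, 2 * (pder d i ρ x * pder d j (fun y => pder d i ρ y) x) := by
      rw [pder_sum Finset.univ (fun l y => (pder d l ρ y) ^ 2) (fun l _ => (hPd x hx l).pow 2)]
      refine Finset.sum_congr rfl fun l _ => ?_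
      have e3 : (fun y => (pder d l ρ y) ^ 2) = fun y => pder d l ρ y * pder d l ρ y :=
        funext fun y => pow_two _
      rw [e3, pder_mul (hPd x hx l) (hPd x hx l)]; ring
    rw [hG', Finset.mul_sum, Finset.mul_sum]
    exact Finset.sum_congr rfl fun i _ => by ring
  rw [hCsum]
  ring
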